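/- arXiv:1802.02181 — 4 statements merged into one kernel-verified Lean document; each statement's English description precedes it below -/
import Mathlib

section
/- Let A be an n×n real matrix, Q ⊆ V = {1, …, n}, and α ∈ ℝ. Suppose x ∈ Δ and there exists an index i ∉ σ(x) with (Ax)ᵢ > xᵀ(A − αI_Q)x. Then x is not a KKT point of f_Q^α on Δ: there exist no λ ∈ ℝ and μ ∈ ℝⁿ with μⱼ ≥ 0 for all j such that 2[(A − αI_Q)x]ⱼ − λ + μⱼ = 0 for all j and Σⱼ xⱼμⱼ = 0. -/
open Matrix Finset

/-- The diagonal matrix `I_Q` with `(I_Q)ᵢᵢ = 1` for `i ∉ Q` and `0` for `i ∈ Q`. -/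
def IQmat (n : ℕ) (Q : Finset (Fin n)) : Matrix (Fin n) (Fin n) ℝ :=
  Matrix.diagonal (fun j => if j ∈ Q then 0 else 1)

section KKT

variable {ι : Type*} [Fintype ι]

theorem kkt_multiplier_eq_of_sum_eq_one {x g μ : ι → ℝ} {lam : ℝ} (hx : ∑ j, x j = 1)
    (hst : ∀ j, 2 * g j - lam + μ j = 0) (hcomp : ∑ j, x j * μ j = 0) :
    lam = 2 * (x ⬝ᵥ g) := by
  have hμ : ∀ j, μ j = lam - 2 * g j := fun j => by linarith [hst j]
  have hsum : ∑ j, x j * μ j = lam * ∑ j, x j - 2 * (x ⬝ᵥ g) := by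
    simp only [hμ, mul_sub, Finset.sum_sub_distrib, Finset.mul_sum, dotProduct]
    congr 1 <;> refine Finset.sum_congr rfl fun j _ => by ring
  rw [hcomp, hx] at hsum
  linarith

/-- The multiplier of a coordinate is `μ j = 2 (x ⬝ᵥ g - g j)`, and it must be nonnegative. -/
theorem apply_le_dotProduct_of_kkt {x g μ : ι → ℝ} {lam : ℝ} (hx : ∑ j, x j = 1)
    (hμ : ∀ j, 0 ≤ μ j) (hst : ∀ j, 2 * g j - lam + μ j = 0)
    (hcomp : ∑ j, x j * μ j = 0) (j : ι) :
    g j ≤ x ⬝ᵥ g := by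
  have hlam := kkt_multiplier_eq_of_sum_eq_one hx hst hcomp
  linarith [hst j, hμ j]

end KKT

theorem sub_smul_IQmat_mulVec_apply_of_eq_zero {n : ℕ} (A : Matrix (Fin n) (Fin n) ℝ)
    (Q : Finset (Fin n)) (α : ℝ) {x : Fin n → ℝ} {i : Fin n} (hxi : x i = 0) :
    ((A - α • IQmat n Q) *ᵥ x) i = (A *ᵥ x) i := by
  simp [Matrix.sub_mulVec, Matrix.smul_mulVec, IQmat, Matrix.mulVec_diagonal, hxi]

/-- If `x ∈ Δ` and there is an index `i ∉ σ(x)` with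
`(Ax)ᵢ > xᵀ(A − αI_Q)x`, then `x` is not a KKT point of `f_Q^α` on `Δ`:
no multipliers `λ ∈ ℝ`, `μ ≥ 0` satisfy the stationarity and complementarity
conditions. -/
theorem not_kkt_of_dominant_index
    (n : ℕ) (A : Matrix (Fin n) (Fin n) ℝ) (Q : Finset (Fin n)) (α : ℝ)
    (x : Fin n → ℝ) (hx : x ∈ stdSimplex ℝ (Fin n))
    (i : Fin n) (hi : ¬ 0 < x i)
    (hgt : x ⬝ᵥ ((A - α • IQmat n Q) *ᵥ x) < (A *ᵥ x) i) :
    ¬ ∃ (lam : ℝ) (μ : Fin n → ℝ),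
        (∀ j, 0 ≤ μ j) ∧
        (∀ j, 2 * (((A - α • IQmat n Q) *ᵥ x) j) - lam + μ j = 0) ∧
        ∑ j, x j * μ j = 0 := by
  rintro ⟨lam, μ, hμ, hst, hcomp⟩
  have hxi : x i = 0 := le_antisymm (not_lt.mp hi) (hx.1 i)
  have hle := apply_le_dotProduct_of_kkt hx.2 hμ hst hcomp i
  rw [sub_smul_IQmat_mulVec_apply_of_eq_zero A Q α hxi] at hle
  exact hle.not_gt hgt
end

section
/- Let A be a symmetric n×n real matrix, Q ⊆ V = {1, …, n}, and α ∈ ℝ. Suppose x ∈ Δ and there exists an index i ∉ σ(x) with (Ax)ᵢ > xᵀ(A − αI_Q)x. Then x is not a local maximizer of f_Q^α over Δ: every neighborhood of x contains a point z ∈ Δ with f_Q^α(z) > f_Q^α(x). -/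
/-!
Let `B = A - α I_Q`, which is symmetric, and move from `x` towards the vertex `eᵢ` along
`x + t (eᵢ - x)`, which stays in `Δ` for `t ∈ [0, 1]`. Along this segment `f_Q^α` is the quadratic
`f(x) + 2t (eᵢ - x)ᵀBx + t² (eᵢ - x)ᵀB(eᵢ - x)`, and since `xᵢ = 0` the diagonal term does not
see coordinate `i`, so `(eᵢ - x)ᵀBx = (Ax)ᵢ - xᵀBx > 0`. Hence `f` increases for
small `t > 0`, arbitrarily close to `x`.
-/

open Matrix Topology Filter

theorem Matrix.IsSymm.dotProduct_mulVec_add_smul {ι R : Type*} [Fintype ι] [CommRing R]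
    {B : Matrix ι ι R} (hB : B.IsSymm) (x d : ι → R) (t : R) :
    (x + t • d) ⬝ᵥ (B *ᵥ (x + t • d)) =
      x ⬝ᵥ (B *ᵥ x) + 2 * t * (d ⬝ᵥ (B *ᵥ x)) + t ^ 2 * (d ⬝ᵥ (B *ᵥ d)) := by
  have hxd : x ⬝ᵥ (B *ᵥ d) = d ⬝ᵥ (B *ᵥ x) := by
    rw [dotProduct_mulVec, ← mulVec_transpose, hB.eq, dotProduct_comm]
  simp only [mulVec_add, mulVec_smul, dotProduct_add, add_dotProduct, dotProduct_smul,
    smul_dotProduct, hxd, smul_eq_mul]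
  ring

theorem eventually_lt_add_mul_add_mul_sq {a b : ℝ} (hb : 0 < b) (q : ℝ) :
    ∀ᶠ t in 𝓝[>] (0 : ℝ), a < a + b * t + q * t ^ 2 := by
  have hlin : ∀ᶠ t in 𝓝 (0 : ℝ), 0 < b + q * t := by
    have hcont : Continuous fun t : ℝ => b + q * t := by fun_prop
    exact hcont.tendsto' 0 b (by simp) |>.eventually (eventually_gt_nhds hb)
  filter_upwards [nhdsWithin_le_nhds hlin, self_mem_nhdsWithin] with t ht (htpos : 0 < t)
  nlinarith [mul_pos htpos ht]

theorem Matrix.IsSymm.exists_near_lt_dotProduct_mulVec {ι : Type*} [Fintype ι]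
    {B : Matrix ι ι ℝ} (hB : B.IsSymm) {S : Set (ι → ℝ)} (hS : Convex ℝ S) {x y : ι → ℝ}
    (hx : x ∈ S) (hy : y ∈ S) (hascent : 0 < (y - x) ⬝ᵥ (B *ᵥ x)) :
    ∀ U ∈ 𝓝 x, ∃ z ∈ U, z ∈ S ∧ x ⬝ᵥ (B *ᵥ x) < z ⬝ᵥ (B *ᵥ z) := by
  intro U hU
  have hpath : Tendsto (fun t : ℝ => x + t • (y - x)) (𝓝[>] 0) (𝓝 x) := by
    have hcont : Continuous fun t : ℝ => x + t • (y - x) := by fun_prop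
    exact (hcont.tendsto' 0 x (by simp)).mono_left nhdsWithin_le_nhds
  have hsmall : ∀ᶠ t in 𝓝[>] (0 : ℝ), t ∈ Set.Icc 0 1 :=
    mem_of_superset (Ioo_mem_nhdsGT one_pos) Set.Ioo_subset_Icc_self
  obtain ⟨t, htU, htS, hlt⟩ := (hpath.eventually hU |>.and <| hsmall.and <|
    eventually_lt_add_mul_add_mul_sq (mul_pos two_pos hascent) ((y - x) ⬝ᵥ (B *ᵥ (y - x)))).exists
  refine ⟨_, htU, hS.add_smul_sub_mem hx hy htS, ?_⟩
  rw [hB.dotProduct_mulVec_add_smul]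
  linarith

theorem IQmat_mulVec_apply (n : ℕ) (Q : Finset (Fin n)) (x : Fin n → ℝ) (i : Fin n) :
    (IQmat n Q *ᵥ x) i = if i ∈ Q then 0 else x i := by
  simp [IQmat, mulVec_diagonal]

theorem isSymm_IQmat (n : ℕ) (Q : Finset (Fin n)) : (IQmat n Q).IsSymm :=
  isSymm_diagonal _

/-- Let `A` be symmetric. If `x ∈ Δ` and there is an index `i ∉ σ(x)` with
`(Ax)ᵢ > xᵀ(A − αI_Q)x`, then `x` is not a local maximizer of `f_Q^α` over `Δ`:
every neighborhood of `x` contains a point `z ∈ Δ` with `f_Q^α(z) > f_Q^α(x)`. -/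
theorem not_localMax_of_dominant_index
    (n : ℕ) (A : Matrix (Fin n) (Fin n) ℝ) (hA : A.IsSymm)
    (Q : Finset (Fin n)) (α : ℝ)
    (x : Fin n → ℝ) (hx : x ∈ stdSimplex ℝ (Fin n))
    (i : Fin n) (hi : ¬ 0 < x i)
    (hgt : x ⬝ᵥ ((A - α • IQmat n Q) *ᵥ x) < (A *ᵥ x) i) :
    ∀ U ∈ 𝓝 x, ∃ z ∈ U, z ∈ stdSimplex ℝ (Fin n) ∧
      x ⬝ᵥ ((A - α • IQmat n Q) *ᵥ x) < z ⬝ᵥ ((A - α • IQmat n Q) *ᵥ z) := by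
  have hxi : x i = 0 := le_antisymm (not_lt.mp hi) (hx.1 i)
  refine (hA.sub ((isSymm_IQmat n Q).smul α)).exists_near_lt_dotProduct_mulVec
    (convex_stdSimplex ℝ _) hx (single_mem_stdSimplex ℝ i) ?_
  have hBx : ((A - α • IQmat n Q) *ᵥ x) i = (A *ᵥ x) i := by
    rw [sub_mulVec, Pi.sub_apply, smul_mulVec, Pi.smul_apply, IQmat_mulVec_apply, hxi, ite_self,
      smul_zero, sub_zero]
  rw [sub_dotProduct, single_one_dotProduct, hBx]
  linarith
end

section
/- Let A be an n×n real matrix with aᵢⱼ = aⱼᵢ ≥ 0 for all i, j and aᵢᵢ = 0 for all i. If x ∈ Δ is a strict local maximizer of f(x) = xᵀAx over the standard simplex Δ and its support S = σ(x) satisfies the nondegeneracy condition w_{S∪{i}}(i) ≠ 0 for every i ∉ S, then S is a dominant set for A. -/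
/-!
The weight `w_T(i)` is, up to the sign `(-1)^|T|`, the cofactor at `(i, ∞)` of the bordered
matrix `[[A_T, 𝟙], [𝟙ᵀ, 0]]`. Hence `A w_T` is constant on `T`, and the defining recursion
collapses to `w_T(i) = (A w_{T∖i})_i - (A w_{T∖i})_k` for any `k ∈ T∖i`.

At a strict local maximizer `x` of `xᵀAx` on the simplex, moving mass from `j ∈ S = σ(x)` to `i`
gives `(Ax)_i ≤ (Ax)_j` (first order), and perturbing within `S` shows that `A` is negative
definite on zero-sum vectors supported in `S` (second order). Negative definiteness makes a vector
supported in `S` on which `A` is constant unique up to scaling, so `w_S = W(S) • x`; comparing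
`w_T` with `w_{T∖i}` in the quadratic form gives `W(T) > 0` for every nonempty `T ⊆ S` by
induction. Finally `w_{S∪{i}}(i) = W(S) ((Ax)_i - (Ax)_k) ≤ 0`, strictly by nondegeneracy.
-/

open Matrix Finset Topology

/-- The recursive weight `w_S(i)` of the dominant-set framework:
`w_S(i) = 1` if `|S| = 1`, and
`w_S(i) = ∑_{j ∈ S∖{i}} (A j i − AWDeg_{S∖{i}}(j)) · w_{S∖{i}}(j)` otherwise,
where `AWDeg_T(j) = (1/|T|) ∑_{k ∈ T} A j k`. (Values for `i ∉ S` or `S = ∅` are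
irrelevant and set to `1`.) -/
noncomputable def dsWeight {n : ℕ} (A : Matrix (Fin n) (Fin n) ℝ) :
    Finset (Fin n) → Fin n → ℝ := fun S i =>
  if h : 2 ≤ S.card ∧ i ∈ S then
    ∑ j ∈ S.erase i,
      (A j i - (((S.erase i).card : ℝ))⁻¹ * ∑ k ∈ S.erase i, A j k) *
        dsWeight A (S.erase i) j
  else 1
termination_by S => S.card
decreasing_by exact Finset.card_erase_lt_of_mem h.2

/-- The total weight `W(S) = ∑_{i ∈ S} w_S(i)`. -/
noncomputable def dsTotalWeight {n : ℕ} (A : Matrix (Fin n) (Fin n) ℝ)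
    (S : Finset (Fin n)) : ℝ :=
  ∑ i ∈ S, dsWeight A S i

/-- `S` is a dominant set: `S` is nonempty, `W(T) > 0` for every nonempty `T ⊆ S`,
`w_S(i) > 0` for all `i ∈ S`, and `w_{S∪{i}}(i) < 0` for all `i ∉ S`. -/
def IsDominantSet {n : ℕ} (A : Matrix (Fin n) (Fin n) ℝ) (S : Finset (Fin n)) : Prop :=
  S.Nonempty ∧
  (∀ T ⊆ S, T.Nonempty → 0 < dsTotalWeight A T) ∧
  (∀ i ∈ S, 0 < dsWeight A S i) ∧
  (∀ i ∉ S, dsWeight A (insert i S) i < 0)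

open Filter

namespace Matrix

variable {ι : Type*} [Fintype ι]

theorem det_updateRow_eq_sum_mul_adjugate {R : Type*} [CommRing R] [DecidableEq ι]
    (M : Matrix ι ι R) (j : ι) (b : ι → R) :
    (M.updateRow j b).det = ∑ r, b r * adjugate M r j := by
  rw [det_eq_sum_mul_adjugate_row _ j]
  simp only [adjugate_apply, updateRow_idem, updateRow_self]

theorem dotProduct_eq_mul_sum_of_eqOn {T : Finset ι} {z v : ι → ℝ} {c : ℝ}
    (hz : ∀ k ∉ T, z k = 0) (hv : ∀ k ∈ T, v k = c) : z ⬝ᵥ v = c * ∑ k, z k := by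
  rw [dotProduct, mul_sum]
  refine sum_congr rfl fun k _ => ?_
  by_cases hk : k ∈ T
  · rw [hv k hk, mul_comm]
  · simp [hz k hk]

theorem dotProduct_eq_mul_sum_add_of_eqOn_erase [DecidableEq ι] {T : Finset ι} {z v : ι → ℝ}
    {c : ℝ} {i : ι} (hz : ∀ k ∉ T, z k = 0) (hi : i ∈ T) (hv : ∀ k ∈ T.erase i, v k = c) :
    z ⬝ᵥ v = c * ∑ k, z k + z i * (v i - c) := by
  rw [dotProduct, mul_sum, ← Fintype.sum_ite_eq' i fun k => z k * (v k - c), ← sum_add_distrib]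
  refine sum_congr rfl fun k _ => ?_
  by_cases hki : k = i
  · subst hki
    simp only [if_true]
    ring
  · by_cases hk : k ∈ T
    · simp [hki, hv k (mem_erase.2 ⟨hki, hk⟩), mul_comm]
    · simp [hki, hz k hk]

variable {A : Matrix ι ι ℝ}

theorem IsSymm.dotProduct_mulVec_comm (hA : A.IsSymm) (v w : ι → ℝ) :
    v ⬝ᵥ A *ᵥ w = w ⬝ᵥ A *ᵥ v := by
  rw [dotProduct_mulVec, ← mulVec_transpose, hA.eq, dotProduct_comm]

theorem IsSymm.dotProduct_mulVec_add_smul_s10 (hA : A.IsSymm) (x y : ι → ℝ) (t : ℝ) :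
    (x + t • y) ⬝ᵥ A *ᵥ (x + t • y) =
      x ⬝ᵥ A *ᵥ x + t * (2 * (y ⬝ᵥ A *ᵥ x) + t * (y ⬝ᵥ A *ᵥ y)) := by
  simp only [mulVec_add, mulVec_smul, add_dotProduct, dotProduct_add, smul_dotProduct,
    dotProduct_smul, hA.dotProduct_mulVec_comm x y, smul_eq_mul]
  ring

end Matrix

def IsNegDefOnZeroSum {ι : Type*} [Fintype ι] (A : Matrix ι ι ℝ) (T : Finset ι) : Prop :=
  ∀ y : ι → ℝ, (∀ k ∉ T, y k = 0) → ∑ k, y k = 0 → y ≠ 0 → y ⬝ᵥ A *ᵥ y < 0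

namespace IsNegDefOnZeroSum

variable {ι : Type*} [Fintype ι] {A : Matrix ι ι ℝ} {S T : Finset ι}

theorem mono (h : IsNegDefOnZeroSum A T) (hST : S ⊆ T) : IsNegDefOnZeroSum A S :=
  fun y hy => h y fun k hk => hy k fun hkS => hk (hST hkS)

theorem smul_eq_smul_of_mulVec_eqOn (h : IsNegDefOnZeroSum A T) {u v : ι → ℝ} {a b : ℝ}
    (hu : ∀ k ∉ T, u k = 0) (hv : ∀ k ∉ T, v k = 0) (hAu : ∀ k ∈ T, (A *ᵥ u) k = a)
    (hAv : ∀ k ∈ T, (A *ᵥ v) k = b) : (∑ k, v k) • u = (∑ k, u k) • v := by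
  set z := (∑ k, v k) • u - (∑ k, u k) • v
  by_contra hne
  have hz : ∀ k ∉ T, z k = 0 := fun k hk => by simp [z, hu k hk, hv k hk]
  have hzsum : ∑ k, z k = 0 := by
    simp only [z, Pi.sub_apply, Pi.smul_apply, smul_eq_mul, sum_sub_distrib, ← mul_sum]
    ring
  have hAz : ∀ k ∈ T, (A *ᵥ z) k = (∑ k, v k) * a - (∑ k, u k) * b := fun k hk => by
    simp [z, mulVec_sub, mulVec_smul, hAu k hk, hAv k hk]
  have hq := h z hz hzsum (sub_ne_zero.2 hne)
  rw [dotProduct_eq_mul_sum_of_eqOn hz hAz, hzsum, mul_zero] at hq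
  exact hq.false

end IsNegDefOnZeroSum

section StrictLocalMax

variable {ι : Type*} [Fintype ι] {A : Matrix ι ι ℝ} {x : ι → ℝ}

theorem eventually_add_smul_mem_stdSimplex {y : ι → ℝ} (hx : x ∈ stdSimplex ℝ ι)
    (hy : ∑ k, y k = 0) (hpos : ∀ k, x k = 0 → 0 ≤ y k) :
    ∀ᶠ t in 𝓝[>] (0 : ℝ), x + t • y ∈ stdSimplex ℝ ι := by
  have hnonneg (k : ι) : ∀ᶠ t in 𝓝[>] (0 : ℝ), 0 ≤ x k + t * y k := by
    rcases (hx.1 k).eq_or_lt with hxk | hxk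
    · filter_upwards [self_mem_nhdsWithin] with t ht
      rw [← hxk, zero_add]
      exact mul_nonneg (le_of_lt ht) (hpos k hxk.symm)
    · have hlim : Tendsto (fun t : ℝ => x k + t * y k) (𝓝[>] 0) (𝓝 (x k)) :=
        ((by fun_prop : Continuous fun t : ℝ => x k + t * y k).tendsto' 0 _ (by simp)).mono_left
          nhdsWithin_le_nhds
      exact (hlim.eventually (lt_mem_nhds hxk)).mono fun _ h => h.le
  filter_upwards [eventually_all.2 hnonneg] with t ht
  refine ⟨fun k => ht k, ?_⟩
  simp [sum_add_distrib, ← mul_sum, hx.2, hy]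

variable (hA : A.IsSymm) (hx : x ∈ stdSimplex ℝ ι) {U : Set (ι → ℝ)} (hU : U ∈ 𝓝 x)
  (hmax : ∀ z ∈ stdSimplex ℝ ι ∩ U, z ≠ x → z ⬝ᵥ A *ᵥ z < x ⬝ᵥ A *ᵥ x)
include hA hx hU hmax

theorem eventually_two_mul_add_neg_of_strictLocalMax {y : ι → ℝ} (hy : ∑ k, y k = 0)
    (hpos : ∀ k, x k = 0 → 0 ≤ y k) (hy0 : y ≠ 0) :
    ∀ᶠ t in 𝓝[>] (0 : ℝ), 0 < t ∧ 2 * (y ⬝ᵥ A *ᵥ x) + t * (y ⬝ᵥ A *ᵥ y) < 0 := by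
  have hU' : ∀ᶠ t in 𝓝[>] (0 : ℝ), x + t • y ∈ U :=
    ((by fun_prop : Continuous fun t : ℝ => x + t • y).tendsto' 0 _ (by simp)).mono_left
      nhdsWithin_le_nhds hU
  filter_upwards [self_mem_nhdsWithin, eventually_add_smul_mem_stdSimplex hx hy hpos, hU']
    with t (ht : 0 < t) hmem hmemU
  have hne : x + t • y ≠ x := by simpa [ht.ne'] using hy0
  have hlt := hmax _ ⟨hmem, hmemU⟩ hne
  rw [hA.dotProduct_mulVec_add_smul_s10] at hlt
  exact ⟨ht, neg_of_mul_neg_right (by linarith) ht.le⟩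

theorem mulVec_le_of_strictLocalMax {i j : ι} (hij : i ≠ j) (hj : 0 < x j) :
    (A *ᵥ x) i ≤ (A *ᵥ x) j := by
  classical
  set y : ι → ℝ := Pi.single i 1 - Pi.single j 1
  have hy : ∑ k, y k = 0 := by simp [y, sum_sub_distrib]
  have hpos (k : ι) (hk : x k = 0) : 0 ≤ y k := by
    have hkj : k ≠ j := by rintro rfl; exact hj.ne' hk
    by_cases hki : k = i <;> simp [y, hki, hkj, hij]
  have hy0 : y ≠ 0 := fun h => by simpa [y, hij] using congrFun h i
  have hlim : Tendsto (fun t : ℝ => 2 * (y ⬝ᵥ A *ᵥ x) + t * (y ⬝ᵥ A *ᵥ y)) (𝓝[>] 0)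
      (𝓝 (2 * (y ⬝ᵥ A *ᵥ x))) :=
    ((by fun_prop : Continuous fun t : ℝ => 2 * (y ⬝ᵥ A *ᵥ x) + t * (y ⬝ᵥ A *ᵥ y)).tendsto' 0 _
      (by simp)).mono_left nhdsWithin_le_nhds
  have hle := le_of_tendsto hlim ((eventually_two_mul_add_neg_of_strictLocalMax hA hx hU hmax
    hy hpos hy0).mono fun _ h => h.2.le)
  simp only [y, sub_dotProduct, single_dotProduct, one_mul] at hle
  linarith

theorem mulVec_eq_of_strictLocalMax {i j : ι} (hi : 0 < x i) (hj : 0 < x j) :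
    (A *ᵥ x) i = (A *ᵥ x) j := by
  rcases eq_or_ne i j with rfl | hij
  · rfl
  · exact le_antisymm (mulVec_le_of_strictLocalMax hA hx hU hmax hij hj)
      (mulVec_le_of_strictLocalMax hA hx hU hmax hij.symm hi)

theorem isNegDefOnZeroSum_of_strictLocalMax {T : Finset ι} {μ : ℝ} (hT : ∀ k ∈ T, 0 < x k)
    (hμ : ∀ k ∈ T, (A *ᵥ x) k = μ) : IsNegDefOnZeroSum A T := by
  intro y hy hsum hy0
  have hpos (k : ι) (hk : x k = 0) : 0 ≤ y k :=
    (hy k fun hkT => (hT k hkT).ne' hk).ge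
  have hyx : y ⬝ᵥ A *ᵥ x = 0 := by rw [dotProduct_eq_mul_sum_of_eqOn hy hμ, hsum, mul_zero]
  obtain ⟨t, ht, hneg⟩ :=
    (eventually_two_mul_add_neg_of_strictLocalMax hA hx hU hmax hsum hpos hy0).exists
  rw [hyx, mul_zero, zero_add] at hneg
  exact neg_of_mul_neg_right hneg ht.le

end StrictLocalMax

section Weights

variable {n : ℕ}

noncomputable def dsWeightVec (A : Matrix (Fin n) (Fin n) ℝ) (T : Finset (Fin n)) : Fin n → ℝ :=
  fun k => if k ∈ T then dsWeight A T k else 0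

def borderedMatrix (A : Matrix (Fin n) (Fin n) ℝ) (T : Finset (Fin n)) :
    Matrix (T ⊕ Unit) (T ⊕ Unit) ℝ :=
  fromBlocks (A.submatrix (↑) (↑)) (replicateCol Unit 1) (replicateRow Unit 1) 0

variable {A : Matrix (Fin n) (Fin n) ℝ} {T : Finset (Fin n)} {i k : Fin n}

theorem dsWeightVec_of_mem (hk : k ∈ T) : dsWeightVec A T k = dsWeight A T k := if_pos hk

theorem dsWeightVec_of_notMem (hk : k ∉ T) : dsWeightVec A T k = 0 := if_neg hk

theorem sum_dsWeightVec : ∑ k, dsWeightVec A T k = dsTotalWeight A T :=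
  Fintype.sum_ite_mem T _

theorem mulVec_dsWeightVec (k : Fin n) :
    (A *ᵥ dsWeightVec A T) k = ∑ j ∈ T, A k j * dsWeight A T j := by
  simp only [mulVec, dotProduct, dsWeightVec, mul_ite, mul_zero, Fintype.sum_ite_mem]

theorem dsWeight_eq_sum (hT : 2 ≤ #T) (hi : i ∈ T) :
    dsWeight A T i = ∑ j ∈ T.erase i,
      (A j i - ((#(T.erase i) : ℝ))⁻¹ * ∑ k ∈ T.erase i, A j k) * dsWeight A (T.erase i) j := by
  rw [dsWeight, dif_pos ⟨hT, hi⟩]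

theorem dsWeight_of_card_eq_one (hT : #T = 1) : dsWeight A T i = 1 := by
  rw [dsWeight, dif_neg (by omega)]

theorem dsWeight_eq_mulVec_sub (hA : A.IsSymm) (hT : 2 ≤ #T) (hi : i ∈ T) {μ : ℝ}
    (hμ : ∀ k ∈ T.erase i, (A *ᵥ dsWeightVec A (T.erase i)) k = μ) :
    dsWeight A T i = (A *ᵥ dsWeightVec A (T.erase i)) i - μ := by
  have hE : (#(T.erase i) : ℝ) ≠ 0 := by
    rw [card_erase_of_mem hi]
    exact Nat.cast_ne_zero.2 (by omega)
  have havg : ∑ j ∈ T.erase i, (∑ k ∈ T.erase i, A j k) * dsWeight A (T.erase i) j =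
      #(T.erase i) * μ := by
    calc ∑ j ∈ T.erase i, (∑ k ∈ T.erase i, A j k) * dsWeight A (T.erase i) j
        = ∑ k ∈ T.erase i, (A *ᵥ dsWeightVec A (T.erase i)) k := by
          simp only [mulVec_dsWeightVec, sum_mul]
          rw [sum_comm]
          exact sum_congr rfl fun k _ => sum_congr rfl fun j _ => by rw [hA.apply]
      _ = #(T.erase i) * μ := by rw [sum_congr rfl hμ, sum_const, nsmul_eq_mul]
  rw [dsWeight_eq_sum hT hi, mulVec_dsWeightVec]
  simp only [sub_mul, sum_sub_distrib, mul_assoc, ← mul_sum]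
  rw [havg, inv_mul_cancel_left₀ hE]
  exact congrArg (· - μ) (sum_congr rfl fun j _ => by rw [hA.apply])

@[simp]
theorem borderedMatrix_inl_inl (j k : T) : borderedMatrix A T (.inl j) (.inl k) = A j k := rfl

@[simp]
theorem borderedMatrix_inl_inr (j : T) (u : Unit) :
    borderedMatrix A T (.inl j) (.inr u) = 1 := rfl

def sumUnitEquivErase (hi : i ∈ T) :
    T ⊕ Unit ≃ ((T.erase i : Finset (Fin n)) ⊕ Unit) ⊕ Unit where
  toFun
    | .inl j => if h : j.1 = i then .inr () else .inl (.inl ⟨j.1, mem_erase.2 ⟨h, j.2⟩⟩)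
    | .inr _ => .inl (.inr ())
  invFun
    | .inl (.inl j) => .inl ⟨j.1, mem_of_mem_erase j.2⟩
    | .inl (.inr _) => .inr ()
    | .inr _ => .inl ⟨i, hi⟩
  left_inv := by
    rintro (⟨j, hj⟩ | ⟨⟩)
    · by_cases h : j = i
      · subst h; simp
      · simp [h]
    · simp
  right_inv := by
    rintro ((⟨j, hj⟩ | ⟨⟩) | ⟨⟩)
    · simp [ne_of_mem_erase hj]
    · simp
    · simp

theorem adjugate_borderedMatrix_inl_inr (hi : i ∈ T) :
    adjugate (borderedMatrix A T) (.inl ⟨i, hi⟩) (.inr ()) =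
      -((borderedMatrix A (T.erase i)).updateRow (.inr ())
          (Sum.elim (fun k => A i k) 1)).det := by
  set L := (borderedMatrix A T).updateRow (.inr ()) (Pi.single (.inl ⟨i, hi⟩) 1)
  set e := sumUnitEquivErase hi
  set σ : Equiv.Perm (((T.erase i : Finset (Fin n)) ⊕ Unit) ⊕ Unit) :=
    Equiv.swap (.inl (.inr ())) (.inr ())
  -- Moving `i` last and swapping it with the border row makes the matrix block triangular.
  have hblock : (L.submatrix e.symm e.symm).submatrix σ id =
      fromBlocks ((borderedMatrix A (T.erase i)).updateRow (.inr ())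
          (Sum.elim (fun k => A i k) 1))
        (replicateCol Unit (Sum.elim (fun j => A j i) fun _ => A i i)) 0 (of fun _ _ => 1) := by
    ext r c
    rcases r with (⟨j, hj⟩ | ⟨⟩) | ⟨⟩ <;> rcases c with (⟨k, hk⟩ | ⟨⟩) | ⟨⟩ <;>
      simp_all [L, e, σ, sumUnitEquivErase, borderedMatrix, Equiv.swap_apply_def,
        updateRow_apply, Pi.single_apply]
    exact ne_of_mem_erase hk
  have hσ : (Equiv.Perm.sign σ : ℝ) = -1 := by simp [σ]
  have := det_permute σ (L.submatrix e.symm e.symm)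
  rw [hblock, det_fromBlocks_zero₂₁, det_submatrix_equiv_self, hσ] at this
  simp only [det_unique, of_apply, mul_one] at this
  rw [adjugate_apply]
  linarith

theorem mulVec_dsWeightVec_of_eq_cofactor {c : ℝ}
    (h : ∀ j : T, dsWeight A T j = c * adjugate (borderedMatrix A T) (.inl j) (.inr ()))
    (hk : k ∈ T) :
    (A *ᵥ dsWeightVec A T) k = -c * adjugate (borderedMatrix A T) (.inr ()) (.inr ()) := by
  have hrow := congrFun (congrFun (mul_adjugate (borderedMatrix A T)) (.inl ⟨k, hk⟩)) (.inr ())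
  simp only [mul_apply, Fintype.sum_sum_type, borderedMatrix_inl_inl, borderedMatrix_inl_inr,
    one_mul, Fintype.sum_unique, Matrix.smul_apply, one_apply_ne Sum.inl_ne_inr,
    smul_zero] at hrow
  rw [mulVec_dsWeightVec, ← sum_coe_sort]
  simp only [h, mul_left_comm _ c, ← mul_sum]
  linear_combination c * hrow

theorem dsWeight_eq_cofactor (hA : A.IsSymm) (T : Finset (Fin n)) (j : T) :
    dsWeight A T j = (-1) ^ #T * adjugate (borderedMatrix A T) (.inl j) (.inr ()) := by
  induction T using Finset.strongInduction with
  | H T ih =>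
  obtain ⟨i, hi⟩ := j
  by_cases hT : 2 ≤ #T
  · have hE := ih (T.erase i) (erase_ssubset hi)
    rw [dsWeight_eq_mulVec_sub hA hT hi fun k hk => mulVec_dsWeightVec_of_eq_cofactor hE hk,
      adjugate_borderedMatrix_inl_inr hi, det_updateRow_eq_sum_mul_adjugate,
      Fintype.sum_sum_type, mulVec_dsWeightVec, ← sum_coe_sort]
    rw [← card_erase_add_one hi, pow_succ]
    simp only [hE, Sum.elim_inl, Sum.elim_inr, Pi.one_apply, one_mul, Fintype.sum_unique]
    simp only [mul_left_comm _ ((-1 : ℝ) ^ #(T.erase i)), ← mul_sum]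
    ring
  · have hT1 : #T = 1 := by
      have := card_pos.2 ⟨i, hi⟩
      omega
    have : IsEmpty (T.erase i) :=
      isEmpty_coe_sort.2 (by rw [← card_eq_zero, card_erase_of_mem hi, hT1])
    have : Subsingleton ((T.erase i : Finset (Fin n)) ⊕ Unit) :=
      (Equiv.emptySum _ _).subsingleton
    rw [dsWeight_of_card_eq_one hT1, adjugate_borderedMatrix_inl_inr hi,
      det_eq_elem_of_subsingleton _ (.inr ())]
    simp [hT1]

theorem exists_mulVec_dsWeightVec_eq (hA : A.IsSymm) (T : Finset (Fin n)) :
    ∃ μ, ∀ k ∈ T, (A *ᵥ dsWeightVec A T) k = μ :=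
  ⟨_, fun _ hk => mulVec_dsWeightVec_of_eq_cofactor (dsWeight_eq_cofactor hA T) hk⟩

theorem dsWeightVec_erase_of_notMem (hk : k ∉ T) :
    dsWeightVec A (T.erase i) k = 0 :=
  dsWeightVec_of_notMem fun h => hk (mem_of_mem_erase h)

theorem exists_mulVec_dsWeightVec_erase_eq (hA : A.IsSymm) (hT : 2 ≤ #T) (hi : i ∈ T)
    (hwi : dsWeight A T i = 0) :
    ∃ μ, ∀ k ∈ T, (A *ᵥ dsWeightVec A (T.erase i)) k = μ := by
  obtain ⟨μ, hμ⟩ := exists_mulVec_dsWeightVec_eq hA (T.erase i)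
  refine ⟨μ, fun k hk => ?_⟩
  rcases eq_or_ne k i with rfl | hki
  · linarith [dsWeight_eq_mulVec_sub hA hT hk hμ]
  · exact hμ k (mem_erase.2 ⟨hki, hk⟩)

theorem dotProduct_mulVec_smul_dsWeightVec_sub (hA : A.IsSymm) (h2 : 2 ≤ #T) (hi : i ∈ T)
    {z : Fin n → ℝ} (hz : z = dsTotalWeight A (T.erase i) • dsWeightVec A T -
      dsTotalWeight A T • dsWeightVec A (T.erase i)) :
    z ⬝ᵥ A *ᵥ z =
      -(dsTotalWeight A (T.erase i) * dsTotalWeight A T * dsWeight A T i ^ 2) := by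
  obtain ⟨μ, hμ⟩ := exists_mulVec_dsWeightVec_eq hA T
  obtain ⟨ν, hν⟩ := exists_mulVec_dsWeightVec_eq hA (T.erase i)
  have hz0 (k : Fin n) (hk : k ∉ T) : z k = 0 := by
    simp [hz, dsWeightVec_of_notMem hk, dsWeightVec_erase_of_notMem hk]
  have hAz (k : Fin n) (hk : k ∈ T.erase i) :
      (A *ᵥ z) k = dsTotalWeight A (T.erase i) * μ - dsTotalWeight A T * ν := by
    simp [hz, mulVec_sub, mulVec_smul, hμ k (mem_of_mem_erase hk), hν k hk]
  rw [dotProduct_eq_mul_sum_add_of_eqOn_erase hz0 hi hAz]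
  simp only [hz, mulVec_sub, mulVec_smul, Pi.sub_apply, Pi.smul_apply, smul_eq_mul, hμ i hi,
    dsWeight_eq_mulVec_sub hA h2 hi hν, sum_sub_distrib, ← mul_sum, sum_dsWeightVec,
    dsWeightVec_of_mem hi, dsWeightVec_of_notMem (notMem_erase i T)]
  ring

theorem exists_dsWeight_ne_zero (hA : A.IsSymm) (hneg : IsNegDefOnZeroSum A T) (hT : 2 ≤ #T)
    (hpos : ∀ i ∈ T, 0 < dsTotalWeight A (T.erase i)) : ∃ i ∈ T, dsWeight A T i ≠ 0 := by
  -- Otherwise every `w_{T∖i}` has `A w_{T∖i}` constant on all of `T`, so these vectors are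
  -- pairwise proportional; evaluating at `i` makes `w_{T∖j}` vanish on `T∖j`.
  by_contra! hzero
  obtain ⟨j, hj⟩ : T.Nonempty := card_pos.1 (by omega)
  suffices hvanish : ∀ i ∈ T.erase j, dsWeight A (T.erase j) i = 0 by
    have hW := hpos j hj
    rw [dsTotalWeight, sum_eq_zero hvanish] at hW
    exact hW.false
  intro i hi
  obtain ⟨μ, hμ⟩ := exists_mulVec_dsWeightVec_erase_eq hA hT (mem_of_mem_erase hi)
    (hzero i (mem_of_mem_erase hi))
  obtain ⟨μ', hμ'⟩ := exists_mulVec_dsWeightVec_erase_eq hA hT hj (hzero j hj)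
  have heq := congrFun (hneg.smul_eq_smul_of_mulVec_eqOn (fun _ => dsWeightVec_erase_of_notMem)
    (fun _ => dsWeightVec_erase_of_notMem) hμ hμ') i
  simp only [sum_dsWeightVec, Pi.smul_apply, smul_eq_mul, mul_zero, dsWeightVec_of_mem hi,
    dsWeightVec_of_notMem (notMem_erase i T)] at heq
  exact (mul_eq_zero.1 heq.symm).resolve_left (hpos i (mem_of_mem_erase hi)).ne'

theorem dsTotalWeight_pos (hA : A.IsSymm) (hneg : IsNegDefOnZeroSum A T) (hT : T.Nonempty) :
    0 < dsTotalWeight A T := by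
  induction T using Finset.strongInduction with
  | H T ih =>
  by_cases h2 : 2 ≤ #T
  swap
  · obtain ⟨i, rfl⟩ := card_eq_one.1 (show #T = 1 by have := card_pos.2 hT; omega)
    simp [dsTotalWeight, dsWeight_of_card_eq_one]
  have hsub (i : Fin n) (hi : i ∈ T) : 0 < dsTotalWeight A (T.erase i) :=
    ih _ (erase_ssubset hi) (hneg.mono (erase_subset i T))
      (card_pos.1 (by rw [card_erase_of_mem hi]; omega))
  obtain ⟨i, hi, hwi⟩ := exists_dsWeight_ne_zero hA hneg h2 hsub
  set z := dsTotalWeight A (T.erase i) • dsWeightVec A T -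
    dsTotalWeight A T • dsWeightVec A (T.erase i) with hz_def
  have hz (k : Fin n) (hk : k ∉ T) : z k = 0 := by
    simp [z, dsWeightVec_of_notMem hk, dsWeightVec_erase_of_notMem hk]
  have hzsum : ∑ k, z k = 0 := by
    simp only [z, Pi.sub_apply, Pi.smul_apply, smul_eq_mul, sum_sub_distrib, ← mul_sum,
      sum_dsWeightVec]
    ring
  have hzi : z i = dsTotalWeight A (T.erase i) * dsWeight A T i := by
    simp [z, dsWeightVec_of_mem hi, dsWeightVec_of_notMem (notMem_erase i T)]
  have hz0 : z ≠ 0 := fun h => by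
    have hzi0 := congrFun h i
    rw [hzi, Pi.zero_apply] at hzi0
    exact mul_ne_zero (hsub i hi).ne' hwi hzi0
  have hneg' := hneg z hz hzsum hz0
  rw [dotProduct_mulVec_smul_dsWeightVec_sub hA h2 hi hz_def, neg_lt_zero] at hneg'
  exact pos_of_mul_pos_right (pos_of_mul_pos_left hneg' (sq_nonneg _)) (hsub i hi).le

theorem dsWeightVec_eq_smul_of_mulVec_eqOn (hA : A.IsSymm) (hneg : IsNegDefOnZeroSum A T)
    {x : Fin n → ℝ} {c : ℝ} (hx : ∑ k, x k = 1) (hxT : ∀ k ∉ T, x k = 0)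
    (hAx : ∀ k ∈ T, (A *ᵥ x) k = c) : dsWeightVec A T = dsTotalWeight A T • x := by
  obtain ⟨μ, hμ⟩ := exists_mulVec_dsWeightVec_eq hA T
  simpa [hx, sum_dsWeightVec] using
    hneg.smul_eq_smul_of_mulVec_eqOn (fun _ => dsWeightVec_of_notMem) hxT hμ hAx

theorem dsWeight_insert_self (hA : A.IsSymm) (hi : i ∉ T) (hk : k ∈ T) {x : Fin n → ℝ} {c : ℝ}
    (hw : dsWeightVec A T = c • x) :
    dsWeight A (insert i T) i = c * ((A *ᵥ x) i - (A *ᵥ x) k) := by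
  obtain ⟨μ, hμ⟩ := exists_mulVec_dsWeightVec_eq hA T
  have h2 : 2 ≤ #(insert i T) := by
    rw [card_insert_of_notMem hi]
    have := card_pos.2 ⟨k, hk⟩
    omega
  rw [dsWeight_eq_mulVec_sub hA h2 (mem_insert_self i T) (by rwa [erase_insert hi]),
    erase_insert hi, ← hμ k hk, hw, mulVec_smul, Pi.smul_apply, Pi.smul_apply, ← smul_sub,
    smul_eq_mul]

end Weights

theorem strictLocalMax_support_isDominantSet_general
    (n : ℕ) (A : Matrix (Fin n) (Fin n) ℝ)
    (hsymm : ∀ i j, A i j = A j i)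
    (x : Fin n → ℝ) (hx : x ∈ stdSimplex ℝ (Fin n))
    (hstrict : ∃ U ∈ 𝓝 x, ∀ z ∈ stdSimplex ℝ (Fin n) ∩ U, z ≠ x →
      z ⬝ᵥ (A *ᵥ z) < x ⬝ᵥ (A *ᵥ x))
    (S : Finset (Fin n)) (hSsupp : S = Finset.univ.filter (fun i => 0 < x i))
    (hnondeg : ∀ i ∉ S, dsWeight A (insert i S) i ≠ 0) :
    IsDominantSet A S := by
  obtain ⟨U, hU, hmax⟩ := hstrict
  have hA : A.IsSymm := IsSymm.ext fun i j => hsymm j i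
  have hmemS (k : Fin n) : k ∈ S ↔ 0 < x k := by simp [hSsupp]
  have hxS (k : Fin n) (hk : k ∉ S) : x k = 0 :=
    le_antisymm (not_lt.1 fun h => hk ((hmemS k).2 h)) (hx.1 k)
  obtain ⟨k₀, hk₀⟩ : S.Nonempty := by
    by_contra! hS
    simpa [hS, hxS] using hx.2
  have hconst (k : Fin n) (hk : k ∈ S) : (A *ᵥ x) k = (A *ᵥ x) k₀ :=
    mulVec_eq_of_strictLocalMax hA hx hU hmax ((hmemS k).1 hk) ((hmemS k₀).1 hk₀)
  have hneg := isNegDefOnZeroSum_of_strictLocalMax hA hx hU hmax (fun k => (hmemS k).1) hconst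
  have hW := dsTotalWeight_pos hA hneg ⟨k₀, hk₀⟩
  have hw := dsWeightVec_eq_smul_of_mulVec_eqOn hA hneg hx.2 hxS hconst
  refine ⟨⟨k₀, hk₀⟩, fun T hT hTne => dsTotalWeight_pos hA (hneg.mono hT) hTne, fun i hi => ?_,
    fun i hi => lt_of_le_of_ne ?_ (hnondeg i hi)⟩
  · rw [← dsWeightVec_of_mem hi, hw]
    exact mul_pos hW ((hmemS i).1 hi)
  · rw [dsWeight_insert_self hA hi hk₀ hw]
    exact mul_nonpos_of_nonneg_of_nonpos hW.le <| sub_nonpos.2 <|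
      mulVec_le_of_strictLocalMax hA hx hU hmax (ne_of_mem_of_not_mem hk₀ hi).symm
        ((hmemS k₀).1 hk₀)

/-- if `A` is symmetric, nonnegative, with zero diagonal, `x ∈ Δ` is a
strict local maximizer of `f(x) = xᵀAx` over the standard simplex, and its support
`S = σ(x)` satisfies the nondegeneracy condition `w_{S∪{i}}(i) ≠ 0` for every `i ∉ S`,
then `S` is a dominant set for `A`. -/
theorem strictLocalMax_support_isDominantSet
    (n : ℕ) (A : Matrix (Fin n) (Fin n) ℝ)
    (hsymm : ∀ i j, A i j = A j i) (hnn : ∀ i j, 0 ≤ A i j) (hdiag : ∀ i, A i i = 0)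
    (x : Fin n → ℝ) (hx : x ∈ stdSimplex ℝ (Fin n))
    (hstrict : ∃ U ∈ 𝓝 x, ∀ z ∈ stdSimplex ℝ (Fin n) ∩ U, z ≠ x →
      z ⬝ᵥ (A *ᵥ z) < x ⬝ᵥ (A *ᵥ x))
    (S : Finset (Fin n)) (hSsupp : S = Finset.univ.filter (fun i => 0 < x i))
    (hnondeg : ∀ i ∉ S, dsWeight A (insert i S) i ≠ 0) :
    IsDominantSet A S :=
  strictLocalMax_support_isDominantSet_general n A hsymm x hx hstrict S hSsupp hnondeg
end

section
/- Let A be a symmetric n×n real matrix with nonnegative entries and let x ∈ Δ satisfy xᵀAx > 0. Define the replicator iterate R(x) ∈ ℝⁿ by R(x)ᵢ = xᵢ (Ax)ᵢ / (xᵀAx). Then R(x) ∈ Δ and R(x)ᵀA R(x) ≥ xᵀAx, with equality if and only if R(x) = x. -/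
open Matrix Finset

/-!
Write `V = xᵀAx` and `yᵢ = (Ax)ᵢ / V` for the fitness relative to the mean, so that the
replicator step is `R = x * y`. Using `∑ xᵢ = 1` and the symmetry of `A`, the gain `RᵀAR - V`
splits as `∑ᵢⱼ Aᵢⱼ xᵢ xⱼ (yᵢ yⱼ + yᵢ⁻¹ + yⱼ⁻¹ - 3)` plus `2V` times the mass that `x` puts on
strategies of fitness zero. Each pair term is nonnegative by AM–GM applied to `yᵢ yⱼ`, `yᵢ⁻¹`,
`yⱼ⁻¹`, whose product is `1`, with equality only if `yᵢ = yⱼ = 1`. So at equality every strategy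
with `xᵢ > 0` has positive fitness, hence lies in a pair with `Aᵢⱼ xᵢ xⱼ > 0`, hence has `yᵢ = 1`;
that is, `R = x`.
-/

lemma sq_mul_sq_add_inv_add_inv_sub_three {p q : ℝ} (hp : 0 < p) (hq : 0 < q) :
    p ^ 2 * q ^ 2 + (p ^ 2)⁻¹ + (q ^ 2)⁻¹ - 3
      = ((p - q) ^ 2 + p * q * (p * q - 1) ^ 2 * (p * q + 2)) / (p ^ 2 * q ^ 2) := by
  field_simp
  ring

lemma exists_eq_sq_of_pos {a : ℝ} (ha : 0 < a) : ∃ p > 0, a = p ^ 2 :=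
  ⟨√a, Real.sqrt_pos.2 ha, (Real.sq_sqrt ha.le).symm⟩

theorem three_le_mul_add_inv_add_inv {a b : ℝ} (ha : 0 < a) (hb : 0 < b) :
    3 ≤ a * b + a⁻¹ + b⁻¹ := by
  obtain ⟨p, hp, rfl⟩ := exists_eq_sq_of_pos ha
  obtain ⟨q, hq, rfl⟩ := exists_eq_sq_of_pos hb
  rw [← sub_nonneg, sq_mul_sq_add_inv_add_inv_sub_three hp hq]
  positivity

theorem eq_one_of_mul_add_inv_add_inv_eq_three {a b : ℝ} (ha : 0 < a) (hb : 0 < b)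
    (h : a * b + a⁻¹ + b⁻¹ = 3) : a = 1 ∧ b = 1 := by
  obtain ⟨p, hp, rfl⟩ := exists_eq_sq_of_pos ha
  obtain ⟨q, hq, rfl⟩ := exists_eq_sq_of_pos hb
  rw [← sub_eq_zero, sq_mul_sq_add_inv_add_inv_sub_three hp hq, div_eq_zero_iff,
    or_iff_left (by positivity), add_eq_zero_iff_of_nonneg (by positivity) (by positivity)] at h
  obtain ⟨hpq, hprod⟩ := h
  obtain rfl : p = q := sub_eq_zero.1 (pow_eq_zero_iff two_ne_zero |>.1 hpq)
  have hsq : (p * p - 1) ^ 2 = 0 :=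
    (mul_eq_zero.1 ((mul_eq_zero.1 hprod).resolve_right (by positivity))).resolve_left
      (by positivity)
  have hp1 : p ^ 2 = 1 := by nlinarith
  exact ⟨hp1, hp1⟩

section Replicator

variable {ι : Type*} [Fintype ι] {A : Matrix ι ι ℝ} {x y : ι → ℝ}

lemma dotProduct_mulVec_eq_sum_sum (A : Matrix ι ι ℝ) (u v : ι → ℝ) :
    u ⬝ᵥ (A *ᵥ v) = ∑ i, ∑ j, A i j * u i * v j := by
  simp only [dotProduct, mulVec, mul_sum]
  exact sum_congr rfl fun i _ => sum_congr rfl fun j _ => by ring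

lemma mulVec_pos_of_mul_pos (hA₀ : ∀ i j, 0 ≤ A i j) (hx : ∀ i, 0 ≤ x i) {i j : ι}
    (h : 0 < A i j * x j) : 0 < (A *ᵥ x) i :=
  h.trans_le <| single_le_sum (f := fun k => A i k * x k)
    (fun k _ => mul_nonneg (hA₀ i k) (hx k)) (mem_univ j)

lemma mulVec_pos_of_mul_mul_pos (hA : A.IsSymm) (hA₀ : ∀ i j, 0 ≤ A i j)
    (hx : ∀ i, 0 ≤ x i) {i j : ι} (h : 0 < A i j * x i * x j) :
    0 < (A *ᵥ x) i ∧ 0 < (A *ᵥ x) j := by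
  refine ⟨mulVec_pos_of_mul_pos hA₀ hx (j := j) ?_, mulVec_pos_of_mul_pos hA₀ hx (j := i) ?_⟩
  · exact pos_of_mul_pos_left (by rwa [mul_right_comm] at h) (hx i)
  · exact (hA.apply i j).symm ▸ pos_of_mul_pos_left h (hx j)

theorem replicator_objective_sub_eq (hA : A.IsSymm) (hx : ∑ i, x i = 1)
    (hy : ∀ i, (A *ᵥ x) i = x ⬝ᵥ (A *ᵥ x) * y i) :
    (x * y) ⬝ᵥ (A *ᵥ (x * y)) - x ⬝ᵥ (A *ᵥ x)
      = ∑ i, ∑ j, A i j * x i * x j * (y i * y j + (y i)⁻¹ + (y j)⁻¹ - 3)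
        + 2 * x ⬝ᵥ (A *ᵥ x) * ∑ i, x i * (1 - y i * (y i)⁻¹) := by
  set V := x ⬝ᵥ (A *ᵥ x)
  have hV : V = ∑ i, ∑ j, A i j * x i * x j := dotProduct_mulVec_eq_sum_sum A x x
  have hR : (x * y) ⬝ᵥ (A *ᵥ (x * y)) = ∑ i, ∑ j, A i j * x i * x j * (y i * y j) := by
    rw [dotProduct_mulVec_eq_sum_sum]
    exact sum_congr rfl fun i _ => sum_congr rfl fun j _ => by
      simp only [Pi.mul_apply]; ring
  have hinv : ∑ i, ∑ j, A i j * x i * x j * (y i)⁻¹ = V * ∑ i, x i * (y i * (y i)⁻¹) := by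
    calc _ = (x * y⁻¹) ⬝ᵥ (A *ᵥ x) := by
          rw [dotProduct_mulVec_eq_sum_sum]
          exact sum_congr rfl fun i _ => sum_congr rfl fun j _ => by
            simp only [Pi.mul_apply, Pi.inv_apply]; ring
      _ = V * ∑ i, x i * (y i * (y i)⁻¹) := by
          simp only [dotProduct, hy, mul_sum, Pi.mul_apply, Pi.inv_apply]
          exact sum_congr rfl fun i _ => by ring
  have hinv_symm :
      ∑ i, ∑ j, A i j * x i * x j * (y j)⁻¹ = ∑ i, ∑ j, A i j * x i * x j * (y i)⁻¹ := by
    rw [sum_comm]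
    exact sum_congr rfl fun i _ => sum_congr rfl fun j _ => by rw [hA.apply]; ring
  have hthree : ∑ i, ∑ j, A i j * x i * x j * 3 = 3 * V := by
    rw [hV]
    simp only [← sum_mul]
    ring
  simp only [mul_add, mul_sub, mul_one, sum_add_distrib, sum_sub_distrib, ← hR, hinv_symm, hinv,
    hthree, hx]
  ring

lemma fitness_pos_of_mul_mul_pos (hA : A.IsSymm) (hA₀ : ∀ i j, 0 ≤ A i j)
    (hx : ∀ i, 0 ≤ x i) (hV : 0 < x ⬝ᵥ (A *ᵥ x))
    (hy : ∀ i, (A *ᵥ x) i = x ⬝ᵥ (A *ᵥ x) * y i) {i j : ι} (h : 0 < A i j * x i * x j) :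
    0 < y i ∧ 0 < y j := by
  obtain ⟨hgi, hgj⟩ := mulVec_pos_of_mul_mul_pos hA hA₀ hx h
  rw [hy] at hgi hgj
  exact ⟨pos_of_mul_pos_right hgi hV.le, pos_of_mul_pos_right hgj hV.le⟩

lemma amgm_slack_nonneg (hA : A.IsSymm) (hA₀ : ∀ i j, 0 ≤ A i j) (hx : ∀ i, 0 ≤ x i)
    (hV : 0 < x ⬝ᵥ (A *ᵥ x)) (hy : ∀ i, (A *ᵥ x) i = x ⬝ᵥ (A *ᵥ x) * y i) (i j : ι) :
    0 ≤ A i j * x i * x j * (y i * y j + (y i)⁻¹ + (y j)⁻¹ - 3) := by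
  rcases (mul_nonneg (mul_nonneg (hA₀ i j) (hx i)) (hx j)).eq_or_lt with h | h
  · rw [← h, zero_mul]
  · obtain ⟨hyi, hyj⟩ := fitness_pos_of_mul_mul_pos hA hA₀ hx hV hy h
    exact mul_nonneg h.le (sub_nonneg.2 (three_le_mul_add_inv_add_inv hyi hyj))

lemma replicator_mem_stdSimplex (hx : x ∈ stdSimplex ℝ ι) (hA₀ : ∀ i j, 0 ≤ A i j)
    (hV : 0 < x ⬝ᵥ (A *ᵥ x)) (hy : ∀ i, (A *ᵥ x) i = x ⬝ᵥ (A *ᵥ x) * y i) :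
    x * y ∈ stdSimplex ℝ ι := by
  have hg : ∀ i, 0 ≤ (A *ᵥ x) i := fun i =>
    sum_nonneg fun j _ => mul_nonneg (hA₀ i j) (hx.1 j)
  refine ⟨fun i => mul_nonneg (hx.1 i) (nonneg_of_mul_nonneg_right (hy i ▸ hg i) hV), ?_⟩
  refine mul_left_cancel₀ hV.ne' ?_
  calc x ⬝ᵥ (A *ᵥ x) * ∑ i, (x * y) i = ∑ i, x i * (x ⬝ᵥ (A *ᵥ x) * y i) := by
        rw [mul_sum]
        exact sum_congr rfl fun i _ => by rw [Pi.mul_apply]; ring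
    _ = x ⬝ᵥ (A *ᵥ x) := by simp only [← hy]; rfl
    _ = _ := (mul_one _).symm

theorem objective_le_replicator (hA : A.IsSymm) (hA₀ : ∀ i j, 0 ≤ A i j)
    (hx : x ∈ stdSimplex ℝ ι) (hV : 0 < x ⬝ᵥ (A *ᵥ x))
    (hy : ∀ i, (A *ᵥ x) i = x ⬝ᵥ (A *ᵥ x) * y i) :
    x ⬝ᵥ (A *ᵥ x) ≤ (x * y) ⬝ᵥ (A *ᵥ (x * y)) := by
  rw [← sub_nonneg, replicator_objective_sub_eq hA hx.2 hy]
  exact add_nonneg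
    (sum_nonneg fun i _ => sum_nonneg fun j _ => amgm_slack_nonneg hA hA₀ hx.1 hV hy i j)
    (mul_nonneg (by positivity) (sum_nonneg fun i _ =>
      mul_nonneg (hx.1 i) (sub_nonneg.2 mul_inv_le_one)))

theorem replicator_eq_of_objective_eq (hA : A.IsSymm) (hA₀ : ∀ i j, 0 ≤ A i j)
    (hx : x ∈ stdSimplex ℝ ι) (hV : 0 < x ⬝ᵥ (A *ᵥ x))
    (hy : ∀ i, (A *ᵥ x) i = x ⬝ᵥ (A *ᵥ x) * y i)
    (h : (x * y) ⬝ᵥ (A *ᵥ (x * y)) = x ⬝ᵥ (A *ᵥ x)) : x * y = x := by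
  have hslack := replicator_objective_sub_eq hA hx.2 hy
  have hpair_nonneg := fun i j => amgm_slack_nonneg hA hA₀ hx.1 hV hy i j
  have hself_nonneg : ∀ i, 0 ≤ x i * (1 - y i * (y i)⁻¹) := fun i =>
    mul_nonneg (hx.1 i) (sub_nonneg.2 mul_inv_le_one)
  rw [h, sub_self, eq_comm, add_eq_zero_iff_of_nonneg
    (sum_nonneg fun i _ => sum_nonneg fun j _ => hpair_nonneg i j)
    (mul_nonneg (by positivity) (sum_nonneg fun i _ => hself_nonneg i)),
    mul_eq_zero, or_iff_right (by positivity),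
    sum_eq_zero_iff_of_nonneg fun i _ => sum_nonneg fun j _ => hpair_nonneg i j,
    sum_eq_zero_iff_of_nonneg fun i _ => hself_nonneg i] at hslack
  obtain ⟨hpair, hself⟩ := hslack
  funext i
  rcases (hx.1 i).eq_or_lt with hxi | hxi
  · simp [← hxi]
  have hyi : y i ≠ 0 := by
    rintro hyi
    simpa [hyi, hxi.ne'] using hself i (mem_univ i)
  have hgi : (A *ᵥ x) i ≠ 0 := by
    rw [hy]
    exact mul_ne_zero hV.ne' hyi
  obtain ⟨j, -, hj⟩ := exists_ne_zero_of_sum_ne_zero (f := fun j => A i j * x j) hgi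
  have hν : 0 < A i j * x i * x j := by
    rw [mul_right_comm]
    exact mul_pos ((mul_nonneg (hA₀ i j) (hx.1 j)).lt_of_ne' hj) hxi
  obtain ⟨hyi, hyj⟩ := fitness_pos_of_mul_mul_pos hA hA₀ hx.1 hV hy hν
  have hamgm : y i * y j + (y i)⁻¹ + (y j)⁻¹ = 3 := by
    have := (sum_eq_zero_iff_of_nonneg fun j _ => hpair_nonneg i j).1
      (hpair i (mem_univ i)) j (mem_univ j)
    rwa [mul_eq_zero, or_iff_right hν.ne', sub_eq_zero] at this
  simp [(eq_one_of_mul_add_inv_add_inv_eq_three hyi hyj hamgm).1]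

end Replicator

/-- one step of the discrete replicator dynamics. If `A` is symmetric
with nonnegative entries, `x ∈ Δ` and `xᵀAx > 0`, then the replicator iterate
`R(x)ᵢ = xᵢ (Ax)ᵢ / (xᵀAx)` lies in `Δ` and satisfies `R(x)ᵀA R(x) ≥ xᵀAx`, with
equality iff `R(x) = x`. -/
theorem replicator_step_increases_objective
    (n : ℕ) (A : Matrix (Fin n) (Fin n) ℝ) (hsymm : A.IsSymm)
    (hnn : ∀ i j, 0 ≤ A i j)
    (x : Fin n → ℝ) (hx : x ∈ stdSimplex ℝ (Fin n))
    (hpos : 0 < x ⬝ᵥ (A *ᵥ x))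
    (R : Fin n → ℝ) (hR : R = fun i => x i * (A *ᵥ x) i / (x ⬝ᵥ (A *ᵥ x))) :
    R ∈ stdSimplex ℝ (Fin n) ∧
    x ⬝ᵥ (A *ᵥ x) ≤ R ⬝ᵥ (A *ᵥ R) ∧
    (R ⬝ᵥ (A *ᵥ R) = x ⬝ᵥ (A *ᵥ x) ↔ R = x) := by
  set y : Fin n → ℝ := fun i => (A *ᵥ x) i / (x ⬝ᵥ (A *ᵥ x))
  have hy : ∀ i, (A *ᵥ x) i = x ⬝ᵥ (A *ᵥ x) * y i := fun i =>
    (mul_div_cancel₀ _ hpos.ne').symm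
  obtain rfl : R = x * y := by
    rw [hR]
    funext i
    exact mul_div_assoc _ _ _
  exact ⟨replicator_mem_stdSimplex hx hnn hpos hy, objective_le_replicator hsymm hnn hx hpos hy,
    replicator_eq_of_objective_eq hsymm hnn hx hpos hy, fun h => by rw [h]⟩
end
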